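/- Fix n ≥ 1 and let e = (i, w) and f = (j, v) be edges of S(n) (so w.length = v.length = n − 1) with f < e in the lexicographic order on S(n). Then: Y_{n+1}(j, v ++ [true]) ≤ Y_{n+1}(i, w ++ [false]) ≤ Y_n(i, w) ≤ Y_{n+1}(i, w ++ [true]). Moreover, for each b : Bool, |Y_{n+1}(i, w ++ [b]) − Y_n(i, w)| ≤ Φ i (w ++ [¬b]) / 2. -/

import Mathlib

noncomputable section
open Filter Topology Classical

/-- Lexicographic strict order on positive edges (compared within a sphere `S(n)`):
first the initial-edge index, then the word, with `false < true`. -/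
def EdgeLt {N : ℕ} (e f : Fin N × List Bool) : Prop :=
  e.1 < f.1 ∨ (e.1 = f.1 ∧ List.Lex (· < ·) e.2 f.2)

/-- `Y (i, v)` for an edge of `S (m+1)` given by a word `v` of length `m`:
`Y_n(e) = Φ(e)/2 + ∑_{f ∈ S(n), f < e} Φ(f)`. -/
def Y {N : ℕ} (Φ : Fin N → List Bool → ℝ) (m : ℕ) (i : Fin N) (v : Fin m → Bool) : ℝ :=
  Φ i (List.ofFn v) / 2 +
    ∑ x : Fin N × (Fin m → Bool),
      if EdgeLt (x.1, List.ofFn x.2) (i, List.ofFn v) then Φ x.1 (List.ofFn x.2) else 0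

/-! Write `Y_n(e) = Φ(e)/2 + M_n(e)`, where `M_n(e)` is the mass of the edges of `S(n)` below `e`.
A child of `f` lies below a child of `e` exactly when `f < e`, or `f = e` and the children are
`L e < R e`; so harmonicity gives `M_{n+1}(L e) = M_n(e)` and `M_{n+1}(R e) = M_n(e) + Φ(L e)`,
while positivity gives `M_n(f) + Φ(f) ≤ M_n(e)` for `f < e`. Every claim is then linear
arithmetic. -/

theorem List.lex_append_singleton_iff {α : Type*} {r : α → α → Prop} {u w : List α}
    (h : u.length = w.length) (c d : α) :
    List.Lex r (u ++ [c]) (w ++ [d]) ↔ List.Lex r u w ∨ u = w ∧ r c d := by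
  induction u generalizing w with
  | nil => cases w <;> simp_all
  | cons a t ih =>
    cases w with
    | nil => simp at h
    | cons b s =>
      simp only [List.cons_append, List.cons_lex_cons_iff, List.cons.injEq,
        ih (Nat.succ.inj h)]
      tauto

theorem List.ofFn_snoc {α : Type*} {m : ℕ} (v : Fin m → α) (c : α) :
    List.ofFn (Fin.snoc v c) = List.ofFn v ++ [c] := by
  rw [List.ofFn_succ']
  simp

theorem Fintype.sum_prod_snoc {ι α M : Type*} [Fintype ι] [Fintype α] [AddCommMonoid M]
    {m : ℕ} (g : ι × (Fin (m + 1) → α) → M) :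
    ∑ x, g x = ∑ y : ι × (Fin m → α), ∑ c, g (y.1, Fin.snoc y.2 c) := by
  simp only [Fintype.sum_prod_type]
  refine Finset.sum_congr rfl fun k _ => ?_
  rw [← (Fin.snocEquiv fun _ => α).sum_comp, Fintype.sum_prod_type, Finset.sum_comm]
  rfl

section EdgeOrder

variable {N : ℕ}

theorem edgeLt_iff_toLex_lt {e f : Fin N × List Bool} : EdgeLt e f ↔ toLex e < toLex f :=
  Prod.Lex.toLex_lt_toLex.symm

theorem edgeLt_irrefl (e : Fin N × List Bool) : ¬ EdgeLt e e :=
  edgeLt_iff_toLex_lt.not.mpr (lt_irrefl _)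

theorem EdgeLt.trans {e f g : Fin N × List Bool} (hef : EdgeLt e f) (hfg : EdgeLt f g) :
    EdgeLt e g :=
  edgeLt_iff_toLex_lt.mpr ((edgeLt_iff_toLex_lt.mp hef).trans (edgeLt_iff_toLex_lt.mp hfg))

theorem edgeLt_append_singleton_iff {j i : Fin N} {u w : List Bool}
    (h : u.length = w.length) (c d : Bool) :
    EdgeLt (j, u ++ [c]) (i, w ++ [d]) ↔ EdgeLt (j, u) (i, w) ∨ (j = i ∧ u = w ∧ c < d) := by
  simp only [EdgeLt, List.lex_append_singleton_iff h]
  tauto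

end EdgeOrder

def IsHarmonic {N : ℕ} (Φ : Fin N → List Bool → ℝ) : Prop :=
  ∀ i w, Φ i w = Φ i (w ++ [false]) + Φ i (w ++ [true])

def massBelow {N : ℕ} (Φ : Fin N → List Bool → ℝ) (m : ℕ) (i : Fin N) (w : Fin m → Bool) :
    ℝ :=
  ∑ x : Fin N × (Fin m → Bool),
    if EdgeLt (x.1, List.ofFn x.2) (i, List.ofFn w) then Φ x.1 (List.ofFn x.2) else 0

section MassBelow

variable {N m : ℕ} (Φ : Fin N → List Bool → ℝ)

theorem Y_eq_add_massBelow (i : Fin N) (w : Fin m → Bool) :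
    Y Φ m i w = Φ i (List.ofFn w) / 2 + massBelow Φ m i w :=
  rfl

theorem sum_bool_ite_edgeLt_snoc (hΦ : IsHarmonic Φ) (j i : Fin N) (u w : Fin m → Bool)
    (d : Bool) :
    ∑ c : Bool, (if EdgeLt (j, List.ofFn (Fin.snoc u c)) (i, List.ofFn (Fin.snoc w d))
        then Φ j (List.ofFn (Fin.snoc u c)) else 0) =
      (if EdgeLt (j, List.ofFn u) (i, List.ofFn w) then Φ j (List.ofFn u) else 0) +
        if (j, u) = (i, w) ∧ d = true then Φ i (List.ofFn w ++ [false]) else 0 := by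
  simp only [Fintype.sum_bool, List.ofFn_snoc,
    edgeLt_append_singleton_iff (List.length_ofFn.trans List.length_ofFn.symm)]
  by_cases hlt : EdgeLt (j, List.ofFn u) (i, List.ofFn w)
  · have hne : (j, u) ≠ (i, w) := by
      rintro ⟨⟩
      exact edgeLt_irrefl _ hlt
    rw [hΦ j (List.ofFn u)]
    simp [hlt, hne, add_comm]
  · by_cases hju : (j, u) = (i, w)
    · obtain ⟨⟩ := hju
      cases d <;> simp [hlt]
    · rw [Prod.mk.injEq] at hju
      have hne : ∀ c, ¬ (j = i ∧ u = w ∧ c < d) := fun _ h => hju ⟨h.1, h.2.1⟩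
      simp [hlt, hju, hne]

theorem massBelow_snoc (hΦ : IsHarmonic Φ) (i : Fin N) (w : Fin m → Bool) (d : Bool) :
    massBelow Φ (m + 1) i (Fin.snoc w d) =
      massBelow Φ m i w + if d then Φ i (List.ofFn w ++ [false]) else 0 := by
  rw [massBelow, Fintype.sum_prod_snoc]
  simp only [sum_bool_ite_edgeLt_snoc Φ hΦ, Finset.sum_add_distrib]
  cases d <;> simp [massBelow]

theorem massBelow_add_le (hΦ : ∀ i w, 0 ≤ Φ i w) {i j : Fin N} {w v : Fin m → Bool}
    (hlt : EdgeLt (j, List.ofFn v) (i, List.ofFn w)) :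
    massBelow Φ m j v + Φ j (List.ofFn v) ≤ massBelow Φ m i w := by
  simp only [massBelow, ← Finset.sum_filter]
  set below : Finset (Fin N × (Fin m → Bool)) :=
    Finset.univ.filter fun x => EdgeLt (x.1, List.ofFn x.2) (j, List.ofFn v)
  have hsub : insert (j, v) below ⊆
      Finset.univ.filter fun x => EdgeLt (x.1, List.ofFn x.2) (i, List.ofFn w) := by
    intro x hx
    simp only [below, Finset.mem_insert, Finset.mem_filter, Finset.mem_univ, true_and] at hx ⊢
    rcases hx with rfl | hx
    · exact hlt
    · exact hx.trans hlt
  calc _ = ∑ x ∈ insert (j, v) below, Φ x.1 (List.ofFn x.2) := by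
        rw [Finset.sum_insert (by simpa [below] using edgeLt_irrefl _), add_comm]
    _ ≤ _ := Finset.sum_le_sum_of_subset_of_nonneg hsub fun x _ _ => hΦ _ _

theorem Y_eq_of_isHarmonic (hΦ : IsHarmonic Φ) (i : Fin N) (w : Fin m → Bool) :
    Y Φ m i w =
      (Φ i (List.ofFn w ++ [false]) + Φ i (List.ofFn w ++ [true])) / 2 + massBelow Φ m i w := by
  rw [Y_eq_add_massBelow, hΦ]

theorem Y_snoc_false (hΦ : IsHarmonic Φ) (i : Fin N) (w : Fin m → Bool) :
    Y Φ (m + 1) i (Fin.snoc w false) = Φ i (List.ofFn w ++ [false]) / 2 + massBelow Φ m i w := by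
  rw [Y_eq_add_massBelow, massBelow_snoc Φ hΦ, List.ofFn_snoc, if_neg Bool.false_ne_true,
    add_zero]

theorem Y_snoc_true (hΦ : IsHarmonic Φ) (i : Fin N) (w : Fin m → Bool) :
    Y Φ (m + 1) i (Fin.snoc w true) =
      Φ i (List.ofFn w ++ [true]) / 2 + Φ i (List.ofFn w ++ [false]) + massBelow Φ m i w := by
  rw [Y_eq_add_massBelow, massBelow_snoc Φ hΦ, List.ofFn_snoc, if_pos rfl]
  ring

end MassBelow

theorem Y_monotone_general (N : ℕ) (Φ : Fin N → List Bool → ℝ)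
    (hpos : ∀ (i : Fin N) (w : List Bool), 0 < Φ i w)
    (hharm : ∀ (i : Fin N) (w : List Bool), Φ i w = Φ i (w ++ [false]) + Φ i (w ++ [true]))
    (m : ℕ) (i j : Fin N) (w v : Fin m → Bool)
    (hlt : EdgeLt (j, List.ofFn v) (i, List.ofFn w)) :
    Y Φ (m + 1) j (Fin.snoc v true) ≤ Y Φ (m + 1) i (Fin.snoc w false) ∧
    Y Φ (m + 1) i (Fin.snoc w false) ≤ Y Φ m i w ∧
    Y Φ m i w ≤ Y Φ (m + 1) i (Fin.snoc w true) ∧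
    ∀ b : Bool, |Y Φ (m + 1) i (Fin.snoc w b) - Y Φ m i w| ≤ Φ i (List.ofFn w ++ [!b]) / 2 := by
  have hbelow := massBelow_add_le Φ (fun i w => (hpos i w).le) hlt
  rw [hharm j] at hbelow
  have hLe := Y_snoc_false Φ hharm i w
  have hRe := Y_snoc_true Φ hharm i w
  have hRf := Y_snoc_true Φ hharm j v
  have he := Y_eq_of_isHarmonic Φ hharm i w
  have hLw := hpos i (List.ofFn w ++ [false])
  have hRw := hpos i (List.ofFn w ++ [true])
  have hRv := hpos j (List.ofFn v ++ [true])
  refine ⟨by linarith, by linarith, by linarith, fun b => abs_le.mpr ?_⟩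
  cases b
  · rw [hLe, he, Bool.not_false]
    constructor <;> linarith
  · rw [hRe, he, Bool.not_true]
    constructor <;> linarith

/-- **Monotonicity of the midpoint variables `Y_n`** (Proposition on `Y_n`).
Let `e = (i, w)` and `f = (j, v)` be edges of `S(n)` with `f < e` (here `n = m + 1`, the
words `w, v` of length `m` being given as functions `Fin m → Bool`). Then
`Y_{n+1}(R f) ≤ Y_{n+1}(L e) ≤ Y_n(e) ≤ Y_{n+1}(R e)`, and moreover
`|Y_{n+1}(i, w ++ [b]) − Y_n(i, w)| ≤ Φ i (w ++ [¬b]) / 2` for each `b`. -/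
theorem Y_monotone (N : ℕ) (hN : 1 ≤ N) (Φ : Fin N → List Bool → ℝ)
    (hpos : ∀ (i : Fin N) (w : List Bool), 0 < Φ i w)
    (hharm : ∀ (i : Fin N) (w : List Bool), Φ i w = Φ i (w ++ [false]) + Φ i (w ++ [true]))
    (m : ℕ) (i j : Fin N) (w v : Fin m → Bool)
    (hlt : EdgeLt (j, List.ofFn v) (i, List.ofFn w)) :
    Y Φ (m + 1) j (Fin.snoc v true) ≤ Y Φ (m + 1) i (Fin.snoc w false) ∧
    Y Φ (m + 1) i (Fin.snoc w false) ≤ Y Φ m i w ∧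
    Y Φ m i w ≤ Y Φ (m + 1) i (Fin.snoc w true) ∧
    ∀ b : Bool, |Y Φ (m + 1) i (Fin.snoc w b) - Y Φ m i w| ≤ Φ i (List.ofFn w ++ [!b]) / 2 :=
  Y_monotone_general N Φ hpos hharm m i j w v hlt
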